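/- Let q ∈ [1,2) and let β : ℕ → ℝ be a sequence with β(n) ≤ c·n^{-1/q} for all n ≥ N (for some constants c > 0, N ∈ ℕ). Let τ : ℕ → ℕ be a sequence satisfying τ(n) ≤ ε·n^{1/q} for all n ≥ N(ε), for every ε ∈ (0,1). Then lim_{n→∞} ∑_{m=n-τ(n)}^{n-1} β(m) = 0. -/

import Mathlib

/-!
Eventually `2 τ(n) ≤ n`, so the window `[n - τ(n), n)` lies in `[n / 2, n)`, where every step size
is at most `c (n / 2) ^ (-1/q) = 2 ^ (1/q) c n ^ (-1/q)`. The window sum is therefore at most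
`2 ^ (1/q) c · τ(n) / n ^ (1/q)`, which tends to `0` because `τ(n) = o(n ^ (1/q))`.
-/

open Filter Topology Finset

theorem tendsto_div_rpow_zero_of_le_mul_rpow {p : ℝ} {τ : ℕ → ℝ} (hτ0 : ∀ n, 0 ≤ τ n)
    (hτ : ∀ ε : ℝ, 0 < ε → ε < 1 → ∃ Nε : ℕ, ∀ n ≥ Nε, τ n ≤ ε * (n : ℝ) ^ p) :
    Tendsto (fun n => τ n / (n : ℝ) ^ p) atTop (𝓝 0) := by
  refine Asymptotics.IsLittleO.tendsto_div_nhds_zero (Asymptotics.isLittleO_iff.2 fun ε hε => ?_)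
  obtain ⟨Nε, hNε⟩ := hτ (min ε (1 / 2)) (lt_min hε one_half_pos)
    ((min_le_right _ _).trans_lt one_half_lt_one)
  filter_upwards [eventually_ge_atTop Nε] with n hn
  have hnp : 0 ≤ (n : ℝ) ^ p := Real.rpow_nonneg n.cast_nonneg p
  rw [Real.norm_of_nonneg (hτ0 n), Real.norm_of_nonneg hnp]
  exact (hNε n hn).trans (mul_le_mul_of_nonneg_right (min_le_left _ _) hnp)

theorem eventually_two_mul_le_self {p : ℝ} (hp : p ≤ 1) {τ : ℕ → ℕ}
    (hτ : ∀ ε : ℝ, 0 < ε → ε < 1 → ∃ Nε : ℕ, ∀ n ≥ Nε, (τ n : ℝ) ≤ ε * (n : ℝ) ^ p) :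
    ∀ᶠ n in atTop, 2 * τ n ≤ n := by
  obtain ⟨N, hN⟩ := hτ (1 / 2) one_half_pos one_half_lt_one
  filter_upwards [eventually_ge_atTop (max N 1)] with n hn
  have hn1 : (1 : ℝ) ≤ n := by exact_mod_cast (le_max_right _ _).trans hn
  have hpow : (n : ℝ) ^ p ≤ n := by
    simpa using Real.rpow_le_rpow_of_exponent_le hn1 hp
  have : (τ n : ℝ) ≤ 1 / 2 * n := (hN n ((le_max_left _ _).trans hn)).trans (by gcongr)
  exact_mod_cast (by push_cast; linarith : ((2 * τ n : ℕ) : ℝ) ≤ n)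

theorem sum_Ico_sub_le_of_le_mul_rpow_neg {p c : ℝ} (hp : 0 ≤ p) (hc : 0 ≤ c) {β : ℕ → ℝ}
    {N : ℕ} (hβ : ∀ n ≥ N, β n ≤ c * (n : ℝ) ^ (-p)) {n k : ℕ} (hn : 0 < n) (hN : 2 * N ≤ n)
    (hk : 2 * k ≤ n) :
    ∑ m ∈ Ico (n - k) n, β m ≤ 2 ^ p * c * (k / (n : ℝ) ^ p) := by
  have hn' : (0 : ℝ) < n / 2 := by positivity
  have hterm : ∀ m ∈ Ico (n - k) n, β m ≤ c * ((n : ℝ) / 2) ^ (-p) := fun m hm => by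
    have hm : n ≤ 2 * m := by have := (mem_Ico.1 hm).1; omega
    have hmR : (n : ℝ) / 2 ≤ m := by
      rw [div_le_iff₀ two_pos]; exact_mod_cast (mul_comm m 2 ▸ hm)
    exact (hβ m (by omega)).trans <| mul_le_mul_of_nonneg_left
      (Real.rpow_le_rpow_of_nonpos hn' hmR (neg_nonpos.2 hp)) hc
  calc ∑ m ∈ Ico (n - k) n, β m ≤ k * (c * ((n : ℝ) / 2) ^ (-p)) := by
        simpa [Nat.card_Ico, Nat.sub_sub_self (by omega : k ≤ n)] using
          sum_le_card_nsmul _ _ _ hterm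
    _ = 2 ^ p * c * (k / (n : ℝ) ^ p) := by
        rw [Real.rpow_neg hn'.le, Real.div_rpow (by positivity) zero_le_two]
        field_simp

theorem stmt_3_general (q : ℝ) (hq1 : 1 ≤ q)
    (β : ℕ → ℝ) (hβnonneg : ∀ n, 0 ≤ β n)
    (c : ℝ) (hc : 0 < c) (N : ℕ)
    (hβ : ∀ n ≥ N, β n ≤ c * (n : ℝ) ^ (-(1 / q)))
    (τ : ℕ → ℕ)
    (hτ : ∀ ε : ℝ, 0 < ε → ε < 1 → ∃ Nε : ℕ, ∀ n ≥ Nε, (τ n : ℝ) ≤ ε * (n : ℝ) ^ (1 / q)) :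
    Tendsto (fun n => ∑ m ∈ Finset.Ico (n - τ n) n, β m) atTop (nhds 0) := by
  have hp0 : 0 ≤ 1 / q := one_div_nonneg.2 (by linarith)
  have hp1 : 1 / q ≤ 1 := (div_le_one (by linarith)).2 hq1
  have hratio := tendsto_div_rpow_zero_of_le_mul_rpow (fun n => (τ n).cast_nonneg) hτ
  refine squeeze_zero' (Eventually.of_forall fun n => sum_nonneg fun m _ => hβnonneg m) ?_
    (by simpa only [mul_zero] using hratio.const_mul (2 ^ (1 / q) * c))
  filter_upwards [eventually_two_mul_le_self hp1 hτ, eventually_ge_atTop (2 * N),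
    eventually_gt_atTop 0] with n hτn hN hn
  exact sum_Ico_sub_le_of_le_mul_rpow_neg hp0 hc.le hβ hn hN hτn

/-- Vanishing AoI window sums: if the step sizes satisfy `β(n) ≤ c n^{-1/q}` eventually and the
ages satisfy `τ(n) ≤ ε n^{1/q}` eventually for every `ε ∈ (0,1)`, then
`∑_{m=n-τ(n)}^{n-1} β(m) → 0`. -/
theorem stmt_3 (q : ℝ) (hq1 : 1 ≤ q) (hq2 : q < 2)
    (β : ℕ → ℝ) (hβnonneg : ∀ n, 0 ≤ β n)
    (c : ℝ) (hc : 0 < c) (N : ℕ)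
    (hβ : ∀ n ≥ N, β n ≤ c * (n : ℝ) ^ (-(1 / q)))
    (τ : ℕ → ℕ)
    (hτ : ∀ ε : ℝ, 0 < ε → ε < 1 → ∃ Nε : ℕ, ∀ n ≥ Nε, (τ n : ℝ) ≤ ε * (n : ℝ) ^ (1 / q)) :
    Tendsto (fun n => ∑ m ∈ Finset.Ico (n - τ n) n, β m) atTop (nhds 0) :=
  stmt_3_general q hq1 β hβnonneg c hc N hβ τ hτ
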